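/- Let M ∈ R^{m×n} have rank r and largest singular value σ₁, let Ω be a set of observed indices, and let M̃ agree with M on Ω with ‖M̃‖_* ≤ ‖M‖_*. Then the entrywise mean recovery error satisfies |λ̄(M) − λ̄(M̃)| ≤ (2/√(mn))·√(r²σ₁² − ‖M_Ω‖_F²). -/

import Mathlib

/-- The nuclear norm of a real matrix: `‖A‖_* = trace √(AᵀA)`. -/
noncomputable def nuclearNorm {m n : ℕ} (A : Matrix (Fin m) (Fin n) ℝ) : ℝ :=
  ((Matrix.posSemidef_conjTranspose_mul_self A).1.eigenvectorUnitary.1 *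
    Matrix.diagonal (fun i => Real.sqrt ((Matrix.posSemidef_conjTranspose_mul_self A).1.eigenvalues i)) *
    (star (Matrix.posSemidef_conjTranspose_mul_self A).1.eigenvectorUnitary : Matrix (Fin n) (Fin n) ℝ)).trace

lemma nuc_sqrt_psd {m n : ℕ} (A : Matrix (Fin m) (Fin n) ℝ) :
    ((Matrix.posSemidef_conjTranspose_mul_self A).1.eigenvectorUnitary.1 *
    Matrix.diagonal (fun i => Real.sqrt ((Matrix.posSemidef_conjTranspose_mul_self A).1.eigenvalues i)) *
    (star (Matrix.posSemidef_conjTranspose_mul_self A).1.eigenvectorUnitary :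
      Matrix (Fin n) (Fin n) ℝ)).PosSemidef := by
  have hd : (Matrix.diagonal (fun i => Real.sqrt
      ((Matrix.posSemidef_conjTranspose_mul_self A).1.eigenvalues i))).PosSemidef := by
    rw [Matrix.posSemidef_diagonal_iff]
    intro i; exact Real.sqrt_nonneg _
  have := hd.mul_mul_conjTranspose_same
    (Matrix.posSemidef_conjTranspose_mul_self A).1.eigenvectorUnitary.1
  simpa [Matrix.star_eq_conjTranspose] using this

lemma nuc_sqrt_mul_self {m n : ℕ} (A : Matrix (Fin m) (Fin n) ℝ) :
    ((Matrix.posSemidef_conjTranspose_mul_self A).1.eigenvectorUnitary.1 *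
    Matrix.diagonal (fun i => Real.sqrt ((Matrix.posSemidef_conjTranspose_mul_self A).1.eigenvalues i)) *
    (star (Matrix.posSemidef_conjTranspose_mul_self A).1.eigenvectorUnitary :
      Matrix (Fin n) (Fin n) ℝ)) *
    ((Matrix.posSemidef_conjTranspose_mul_self A).1.eigenvectorUnitary.1 *
    Matrix.diagonal (fun i => Real.sqrt ((Matrix.posSemidef_conjTranspose_mul_self A).1.eigenvalues i)) *
    (star (Matrix.posSemidef_conjTranspose_mul_self A).1.eigenvectorUnitary :
      Matrix (Fin n) (Fin n) ℝ)) = A.conjTranspose * A := by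
  set h := Matrix.posSemidef_conjTranspose_mul_self A
  set U := h.1.eigenvectorUnitary
  have hU : (star U : Matrix (Fin n) (Fin n) ℝ) * U.1 = 1 := by
    have := U.2; exact (Matrix.mem_unitaryGroup_iff').mp this
  conv_rhs => rw [h.1.spectral_theorem]
  rw [Unitary.conjStarAlgAut_apply]
  have e : U.1 * Matrix.diagonal (fun i => Real.sqrt (h.1.eigenvalues i)) * (star U : Matrix (Fin n) (Fin n) ℝ) *
      (U.1 * Matrix.diagonal (fun i => Real.sqrt (h.1.eigenvalues i)) * (star U : Matrix (Fin n) (Fin n) ℝ))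
      = U.1 * (Matrix.diagonal (fun i => Real.sqrt (h.1.eigenvalues i)) * ((star U : Matrix (Fin n) (Fin n) ℝ) * U.1) *
        Matrix.diagonal (fun i => Real.sqrt (h.1.eigenvalues i))) * (star U : Matrix (Fin n) (Fin n) ℝ) := by
    simp only [Matrix.mul_assoc]
  rw [e, hU, Matrix.mul_one, Matrix.diagonal_mul_diagonal]
  congr 3
  ext i
  simp only [Function.comp_apply]
  exact Real.mul_self_sqrt (h.eigenvalues_nonneg i)


-- entry bound for PSD matrices
lemma psd_entry_sq {N : ℕ} (S : Matrix (Fin N) (Fin N) ℝ) (hS : S.PosSemidef)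
    (i j : Fin N) : S i j ^ 2 ≤ S i i * S j j := by
  have hsym : S j i = S i j := by
    have := hS.1
    rw [Matrix.IsHermitian] at this
    conv_lhs => rw [← this]
    simp [Matrix.conjTranspose_apply]
  have key : ∀ t : ℝ, 0 ≤ S i i * (t * t) + (2 * S i j) * t + S j j := by
    intro t
    have h := hS.dotProduct_mulVec_nonneg (fun k => (if k = i then t else 0) + (if k = j then 1 else 0))
    simp only [dotProduct, Matrix.mulVec, star_trivial, dotProduct,
      mul_add, add_mul, mul_ite, ite_mul, mul_zero, zero_mul, mul_one,
      Finset.sum_add_distrib, Finset.sum_ite_eq', Finset.mem_univ, if_true] at h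
    have e : t * (S i i * t) + 1 * (S j i * t) + (t * S i j + 1 * S j j)
        = S i i * (t * t) + (2 * S i j) * t + S j j := by rw [hsym]; ring
    exact le_of_le_of_eq h e
  have := discrim_le_zero key
  rw [discrim] at this
  nlinarith [this]

lemma psd_diag_nonneg {N : ℕ} (S : Matrix (Fin N) (Fin N) ℝ) (hS : S.PosSemidef)
    (i : Fin N) : 0 ≤ S i i := by
  have h := hS.dotProduct_mulVec_nonneg (Pi.single i 1)
  simpa [dotProduct, Matrix.mulVec, Pi.single_apply] using h

lemma nuclearNorm_nonneg {m n : ℕ} (A : Matrix (Fin m) (Fin n) ℝ) :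
    0 ≤ nuclearNorm A := by
  unfold nuclearNorm
  unfold Matrix.trace
  exact Finset.sum_nonneg fun i _ =>
    psd_diag_nonneg _ (nuc_sqrt_psd A) i

lemma frob_le_nuc_sq {m n : ℕ} (A : Matrix (Fin m) (Fin n) ℝ) :
    ∑ i, ∑ j, A i j ^ 2 ≤ nuclearNorm A ^ 2 := by
  set h := Matrix.posSemidef_conjTranspose_mul_self A
  set S := (h.1.eigenvectorUnitary.1 *
    Matrix.diagonal (fun i => Real.sqrt (h.1.eigenvalues i)) *
    (star h.1.eigenvectorUnitary : Matrix (Fin n) (Fin n) ℝ)) with hSdef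
  have hs : S.PosSemidef := nuc_sqrt_psd A
  have hsym : ∀ i j, S j i = S i j := by
    intro i j
    have := hs.1
    rw [Matrix.IsHermitian] at this
    conv_lhs => rw [← this]
    simp [Matrix.conjTranspose_apply]
  have hmul : S * S = A.conjTranspose * A := nuc_sqrt_mul_self A
  have h1 : ∑ i, ∑ j, A i j ^ 2 = Matrix.trace (S * S) := by
    rw [hmul]
    simp only [Matrix.trace, Matrix.diag, Matrix.mul_apply, Matrix.conjTranspose_apply,
      star_trivial, sq]
    rw [Finset.sum_comm]
  have h2 : Matrix.trace (S * S) = ∑ i, ∑ j, (S i j) ^ 2 := by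
    simp only [Matrix.trace, Matrix.diag, Matrix.mul_apply, sq]
    congr 1; ext i; congr 1; ext j; rw [hsym i j]
  have h3 : ∑ i, ∑ j, (S i j) ^ 2 ≤ ∑ i, ∑ j, S i i * S j j :=
    Finset.sum_le_sum fun i _ => Finset.sum_le_sum fun j _ => psd_entry_sq S hs i j
  have h4 : ∑ i, ∑ j, S i i * S j j = (Matrix.trace S) ^ 2 := by
    simp only [Matrix.trace, Matrix.diag, sq, Finset.sum_mul_sum, ← Finset.mul_sum]
  calc ∑ i, ∑ j, A i j ^ 2 = Matrix.trace (S * S) := h1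
    _ = ∑ i, ∑ j, (S i j) ^ 2 := h2
    _ ≤ ∑ i, ∑ j, S i i * S j j := h3
    _ = (Matrix.trace S) ^ 2 := h4
    _ = nuclearNorm A ^ 2 := rfl

/-- if `M` has rank `r`, singular values `σ` (largest `σ₁`) with
`‖M‖_F² = ∑ σ k ^ 2` and `‖M‖_* = ∑ σ k`, and `M̃` agrees with `M` on `Ω` with
`‖M̃‖_* ≤ ‖M‖_*`, then `|λ̄(M) − λ̄(M̃)| ≤ (2/√(mn)) √(r²σ₁² − ‖M_Ω‖_F²)`. -/
theorem nnm_mean_recovery_bound (m n r : ℕ) (hm : 0 < m) (hn : 0 < n)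
    (M Mt : Matrix (Fin m) (Fin n) ℝ)
    (hrank : M.rank = r) (σ : Fin r → ℝ) (hσpos : ∀ k, 0 < σ k) (hanti : Antitone σ)
    (σ₁ : ℝ) (hσ₁ : ∀ k, σ k ≤ σ₁) (hmem : ∃ k, σ k = σ₁)
    (hF : ∑ i, ∑ j, (M i j) ^ 2 = ∑ k, (σ k) ^ 2)
    (hnuc : nuclearNorm M = ∑ k, σ k)
    (Ω : Finset (Fin m × Fin n)) (hΩ : ∀ p ∈ Ω, Mt p.1 p.2 = M p.1 p.2)
    (hmin : nuclearNorm Mt ≤ nuclearNorm M) :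
    |(1 / ((m : ℝ) * n)) * ∑ i, ∑ j, M i j -
        (1 / ((m : ℝ) * n)) * ∑ i, ∑ j, Mt i j| ≤
      (2 / Real.sqrt ((m : ℝ) * n)) *
        Real.sqrt ((r : ℝ) ^ 2 * σ₁ ^ 2 - ∑ p ∈ Ω, (M p.1 p.2) ^ 2) := by
  obtain ⟨k₀, hk₀⟩ := hmem
  have hσ₁pos : 0 < σ₁ := hk₀ ▸ hσpos k₀
  have hr1 : 1 ≤ (r : ℝ) := by exact_mod_cast k₀.pos
  set D : ℝ := (r : ℝ) ^ 2 * σ₁ ^ 2 - ∑ p ∈ Ω, (M p.1 p.2) ^ 2 with hDdef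
  -- nuclear norm of M is at most r σ₁
  have hnucM : nuclearNorm M ≤ (r : ℝ) * σ₁ := by
    rw [hnuc]
    calc ∑ k, σ k ≤ ∑ _k : Fin r, σ₁ := Finset.sum_le_sum fun k _ => hσ₁ k
      _ = (r : ℝ) * σ₁ := by simp [mul_comm]
  -- rewrite double sums as sums over the product type
  have hsumM : ∑ p : Fin m × Fin n, (M p.1 p.2) ^ 2 = ∑ i, ∑ j, (M i j) ^ 2 :=
    Fintype.sum_prod_type _
  have hsumMt : ∑ p : Fin m × Fin n, (Mt p.1 p.2) ^ 2 = ∑ i, ∑ j, (Mt i j) ^ 2 :=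
    Fintype.sum_prod_type _
  have hsplitM := Finset.sum_add_sum_compl Ω (fun p : Fin m × Fin n => (M p.1 p.2) ^ 2)
  have hsplitMt := Finset.sum_add_sum_compl Ω (fun p : Fin m × Fin n => (Mt p.1 p.2) ^ 2)
  -- total Frobenius norms bounded by r² σ₁²
  have hFM : ∑ p : Fin m × Fin n, (M p.1 p.2) ^ 2 ≤ (r : ℝ) ^ 2 * σ₁ ^ 2 := by
    rw [hsumM, hF]
    calc ∑ k, (σ k) ^ 2 ≤ ∑ _k : Fin r, σ₁ ^ 2 := Finset.sum_le_sum fun k _ => by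
          have := hσ₁ k; have := (hσpos k).le; nlinarith
      _ = (r : ℝ) * σ₁ ^ 2 := by simp [mul_comm]
      _ ≤ (r : ℝ) ^ 2 * σ₁ ^ 2 := by
          have hrr : (r : ℝ) ≤ (r : ℝ) ^ 2 := by nlinarith
          exact mul_le_mul_of_nonneg_right hrr (sq_nonneg σ₁)
  have hFMt : ∑ p : Fin m × Fin n, (Mt p.1 p.2) ^ 2 ≤ (r : ℝ) ^ 2 * σ₁ ^ 2 := by
    rw [hsumMt]
    calc ∑ i, ∑ j, (Mt i j) ^ 2 ≤ nuclearNorm Mt ^ 2 := frob_le_nuc_sq Mt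
      _ ≤ ((r : ℝ) * σ₁) ^ 2 := by
          have h0 := nuclearNorm_nonneg Mt
          have h1 := hmin.trans hnucM
          nlinarith
      _ = (r : ℝ) ^ 2 * σ₁ ^ 2 := by ring
  -- Mt agrees with M on Ω
  have hΩeq : ∑ p ∈ Ω, (Mt p.1 p.2) ^ 2 = ∑ p ∈ Ω, (M p.1 p.2) ^ 2 :=
    Finset.sum_congr rfl fun p hp => by rw [hΩ p hp]
  -- off-Ω bounds
  have hA : ∑ p ∈ Ωᶜ, (M p.1 p.2) ^ 2 ≤ D := by
    have := hsplitM; rw [hDdef]; linarith [hFM]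
  have hB : ∑ p ∈ Ωᶜ, (Mt p.1 p.2) ^ 2 ≤ D := by
    rw [hDdef]; rw [hΩeq] at hsplitMt; linarith [hFMt]
  have hD0 : 0 ≤ D :=
    le_trans (Finset.sum_nonneg fun p _ => sq_nonneg _) hA
  -- cross term bound via Cauchy-Schwarz
  have hcross : -(∑ p ∈ Ωᶜ, M p.1 p.2 * Mt p.1 p.2) ≤ D := by
    have hcs := Finset.sum_mul_sq_le_sq_mul_sq Ωᶜ (fun p => M p.1 p.2) (fun p => Mt p.1 p.2)
    have h1 : (∑ p ∈ Ωᶜ, M p.1 p.2 * Mt p.1 p.2) ^ 2 ≤ D ^ 2 := by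
      refine hcs.trans ?_
      have := Finset.sum_nonneg (s := Ωᶜ) (fun p _ => sq_nonneg (M p.1 p.2))
      have := Finset.sum_nonneg (s := Ωᶜ) (fun p _ => sq_nonneg (Mt p.1 p.2))
      nlinarith
    nlinarith [sq_nonneg ((∑ p ∈ Ωᶜ, M p.1 p.2 * Mt p.1 p.2) + D)]
  -- error sum bound
  have hEsq : ∑ p ∈ Ωᶜ, (M p.1 p.2 - Mt p.1 p.2) ^ 2 ≤ 4 * D := by
    have expand : ∑ p ∈ Ωᶜ, (M p.1 p.2 - Mt p.1 p.2) ^ 2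
        = ∑ p ∈ Ωᶜ, (M p.1 p.2) ^ 2 - 2 * ∑ p ∈ Ωᶜ, M p.1 p.2 * Mt p.1 p.2
          + ∑ p ∈ Ωᶜ, (Mt p.1 p.2) ^ 2 := by
      rw [Finset.mul_sum, ← Finset.sum_sub_distrib, ← Finset.sum_add_distrib]
      exact Finset.sum_congr rfl fun p _ => by ring
    rw [expand]; linarith
  -- sum of errors over everything equals sum over Ωᶜ
  have hdiff : (∑ i, ∑ j, M i j) - (∑ i, ∑ j, Mt i j)
      = ∑ p ∈ Ωᶜ, (M p.1 p.2 - Mt p.1 p.2) := by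
    have h1 : ∑ p : Fin m × Fin n, (M p.1 p.2 - Mt p.1 p.2)
        = (∑ i, ∑ j, M i j) - (∑ i, ∑ j, Mt i j) := by
      rw [Finset.sum_sub_distrib, Fintype.sum_prod_type, Fintype.sum_prod_type]
    have h2 := Finset.sum_add_sum_compl Ω (fun p : Fin m × Fin n => M p.1 p.2 - Mt p.1 p.2)
    have h3 : ∑ p ∈ Ω, (M p.1 p.2 - Mt p.1 p.2) = 0 :=
      Finset.sum_eq_zero fun p hp => by rw [hΩ p hp]; ring
    rw [← h1, ← h2, h3, zero_add]
  -- Cauchy-Schwarz for the error sum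
  have hcard : ((Ωᶜ : Finset (Fin m × Fin n)).card : ℝ) ≤ (m : ℝ) * n := by
    calc ((Ωᶜ : Finset (Fin m × Fin n)).card : ℝ)
        ≤ ((Finset.univ : Finset (Fin m × Fin n)).card : ℝ) := by
          exact_mod_cast Finset.card_le_univ _
      _ = (m : ℝ) * n := by simp
  have hCS : ((∑ p ∈ Ωᶜ, (M p.1 p.2 - Mt p.1 p.2)) : ℝ) ^ 2
      ≤ ((m : ℝ) * n) * (4 * D) := by
    have := sq_sum_le_card_mul_sum_sq
      (s := Ωᶜ) (f := fun p : Fin m × Fin n => M p.1 p.2 - Mt p.1 p.2)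
    have hsumE0 : (0:ℝ) ≤ ∑ p ∈ Ωᶜ, (M p.1 p.2 - Mt p.1 p.2) ^ 2 :=
      Finset.sum_nonneg fun p _ => sq_nonneg _
    calc ((∑ p ∈ Ωᶜ, (M p.1 p.2 - Mt p.1 p.2)) : ℝ) ^ 2
        ≤ ((Ωᶜ : Finset (Fin m × Fin n)).card : ℝ)
          * ∑ p ∈ Ωᶜ, (M p.1 p.2 - Mt p.1 p.2) ^ 2 := this
      _ ≤ ((m : ℝ) * n) * (4 * D) := by
          apply mul_le_mul hcard hEsq hsumE0 (by positivity)
  -- conclude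
  have hmn : (0:ℝ) < (m : ℝ) * n := by positivity
  have hsq : Real.sqrt ((m : ℝ) * n) * Real.sqrt ((m : ℝ) * n) = (m : ℝ) * n :=
    Real.mul_self_sqrt hmn.le
  have hsqD : Real.sqrt D * Real.sqrt D = D := Real.mul_self_sqrt hD0
  have habs : |(∑ i, ∑ j, M i j) - (∑ i, ∑ j, Mt i j)|
      ≤ 2 * Real.sqrt ((m : ℝ) * n) * Real.sqrt D := by
    rw [hdiff, ← Real.sqrt_sq_eq_abs]
    refine (Real.sqrt_le_sqrt hCS).trans (le_of_eq ?_)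
    rw [Real.sqrt_mul hmn.le, show (4 : ℝ) * D = 2 ^ 2 * D by ring,
      Real.sqrt_mul (by norm_num : (0:ℝ) ≤ 2^2) D, Real.sqrt_sq (by norm_num : (0:ℝ) ≤ 2)]
    ring
  rw [← mul_sub, abs_mul, abs_of_pos (by positivity : (0:ℝ) < 1 / ((m:ℝ)*n))]
  calc 1 / ((m : ℝ) * n) * |(∑ i, ∑ j, M i j) - (∑ i, ∑ j, Mt i j)|
      ≤ 1 / ((m : ℝ) * n) * (2 * Real.sqrt ((m : ℝ) * n) * Real.sqrt D) := by
        apply mul_le_mul_of_nonneg_left habs (by positivity)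
    _ = (2 / Real.sqrt ((m : ℝ) * n)) * Real.sqrt D := by
        have hs : (0:ℝ) < Real.sqrt ((m : ℝ) * n) := Real.sqrt_pos.mpr hmn
        rw [← hsq]
        field_simp
        rw [Real.sqrt_sq hs.le]
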